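/- Consider the aRB-IRG algorithm under the following assumptions: each X_i is nonempty, closed, and convex; the set X = X_1 × ⋯ × X_d is bounded with ‖x‖ ≤ M for all x ∈ X; f is convex with ‖∇̃f(x)‖ ≤ C_f for all x ∈ X; F is continuous and monotone on X with ‖F(x)‖ ≤ C_F for all x ∈ X; SOL(X,F) is nonempty; and the sequences (γ_k) and (η_k) are strictly positive and nonincreasing. Then for any N ≥ 1, the averaged iterate satisfies E[GAP(x̄_N)] ≤ (4M² γ_N^{r−1} + Σ_{k=0}^{N} γ_k^r (2 p_min η_k C_f M + γ_k C_F² + γ_k η_k² C_f²)) / (p_min Σ_{k=0}^{N} γ_k^r). -/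

import Mathlib

open scoped RealInnerProductSpace
open MeasureTheory ProbabilityTheory

/-- `ℝ^n` decomposed into `d` blocks: `ℝ^{n 0} × ⋯ × ℝ^{n (d-1)}` with the Euclidean norm. -/
abbrev BlockSpace (d : ℕ) (n : Fin d → ℕ) :=
  PiLp 2 (fun i : Fin d => EuclideanSpace ℝ (Fin (n i)))

/-- The solution set `SOL(X,F)` of the variational inequality `VI(X,F)`. -/
def VISol {d : ℕ} {n : Fin d → ℕ} (X : Set (BlockSpace d n))
    (F : BlockSpace d n → BlockSpace d n) : Set (BlockSpace d n) :=
  {x | x ∈ X ∧ ∀ y ∈ X, 0 ≤ ⟪F x, y - x⟫}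

/-- The dual gap function `GAP(x) := sup_{y ∈ X} ⟨F(y), x − y⟩`. -/
noncomputable def dualGap {d : ℕ} {n : Fin d → ℕ} (X : Set (BlockSpace d n))
    (F : BlockSpace d n → BlockSpace d n) (x : BlockSpace d n) : ℝ :=
  sSup ((fun y => ⟪F y, x - y⟫) '' X)

/-!
Fix `y ∈ X`, let `h_k = F(x_k) + η_k g(x_k)` and `i = i_k`. The projected step on block `i`
decreases `Σ_j (p_min/p_j)‖x_k^j − y^j‖²` by `2γ_k (p_min/p_i)⟨h_k^i, x_k^i − y^i⟩`, up to
`γ_k² (p_min/p_i)‖h_k^i‖²`. The rescaled block term equals `p_min⟨h_k, x_k − y⟩ + ⟨v_k, x_k − y⟩`,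
where `v_k = (p_min/p_i) e_i h_k^i − p_min h_k` has mean zero over `i`. Since the gap is a
supremum over `y`, this noise term cannot be averaged directly. An auxiliary sequence
`u_{k+1} = P_X(u_k + γ_k v_k)`, `u_0 = x_0`, absorbs `⟨v_k, u_k − y⟩` into `‖u_k − y‖²` and
leaves `⟨v_k, u_k − x_k⟩`, which does not involve `y`. Monotonicity and `‖g‖ ≤ C_f` turn
`⟨h_k, x_k − y⟩` into `⟨F y, x_k − y⟩` at a cost of `2η_k C_f M`. Both parts of the Lyapunov
function are at most `4M²`. Weighting step `k` by the nondecreasing `γ_k^{r-1}/2` and summing by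
parts therefore bounds `p_min Σ_k γ_k^r ⟨F y, x_k − y⟩`, and with it the gap at `x̄_N`, pathwise.

Each error term depends on `x_k`, `u_k` and `i_k`, and `x_k`, `u_k` depend only on
`i_0, …, i_{k-1}`, which are independent of `i_k`. Its expectation is therefore the expectation
of its `p`-weighted average over `i_k`. In that average `⟨v_k, u_k − x_k⟩` vanishes and the
quadratic terms sum to at most `‖h_k‖² ≤ 2(C_F² + η_k² C_f²)`.
-/

def IsNearestPointMap {H : Type*} [NormedAddCommGroup H] (K : Set H) (P : H → H) : Prop :=
  ∀ z, P z ∈ K ∧ ∀ w ∈ K, ‖z - P z‖ ≤ ‖z - w‖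

noncomputable def weightedAverage {V : Type*} [AddCommGroup V] [Module ℝ V] (w : ℕ → ℝ)
    (x : ℕ → V) (N : ℕ) : V :=
  (∑ k ∈ Finset.range (N + 1), w k)⁻¹ • ∑ k ∈ Finset.range (N + 1), w k • x k

section InnerProductSpace

variable {H : Type*} [NormedAddCommGroup H] [InnerProductSpace ℝ H]

theorem IsNearestPointMap.inner_le_zero {K : Set H} {P : H → H} (hK : Convex ℝ K)
    (hP : IsNearestPointMap K P) (z : H) {y : H} (hy : y ∈ K) : ⟪z - P z, y - P z⟫ ≤ 0 := by
  have : Nonempty K := ⟨⟨y, hy⟩⟩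
  refine (norm_eq_iInf_iff_real_inner_le_zero hK (hP z).1).1 ?_ y hy
  exact le_antisymm (le_ciInf fun w => (hP z).2 w w.2)
    (ciInf_le (f := fun w : K => ‖z - w‖) ⟨0, by rintro _ ⟨w, rfl⟩; exact norm_nonneg _⟩
      ⟨P z, (hP z).1⟩)

theorem IsNearestPointMap.norm_sub_sq_le {K : Set H} {P : H → H} (hK : Convex ℝ K)
    (hP : IsNearestPointMap K P) (z : H) {y : H} (hy : y ∈ K) : ‖P z - y‖ ^ 2 ≤ ‖z - y‖ ^ 2 := by
  have hangle : ⟪z - P z, P z - y⟫ = -⟪z - P z, y - P z⟫ := by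
    rw [← inner_neg_right, neg_sub]
  have hsplit : z - y = (z - P z) + (P z - y) := by abel
  rw [hsplit, norm_add_sq_real, hangle]
  nlinarith [sq_nonneg ‖z - P z‖, hP.inner_le_zero hK z hy]

theorem inner_le_inner_add_smul_add {F g : H → H} {y z : H} (hmono : 0 ≤ ⟪F z - F y, z - y⟫)
    {Cg D η : ℝ} (hg : ‖g z‖ ≤ Cg) (hD : ‖z - y‖ ≤ D) (hη : 0 ≤ η) :
    ⟪F y, z - y⟫ ≤ ⟪F z + η • g z, z - y⟫ + η * Cg * D := by
  have hcs : -⟪g z, z - y⟫ ≤ Cg * D :=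
    (neg_le_abs _).trans ((abs_real_inner_le_norm _ _).trans
      (mul_le_mul hg hD (norm_nonneg _) ((norm_nonneg _).trans hg)))
  rw [inner_sub_left] at hmono
  rw [inner_add_left, real_inner_smul_left]
  nlinarith

theorem mul_inner_weightedAverage_sub {w : ℕ → ℝ} {N : ℕ}
    (hw : ∑ k ∈ Finset.range (N + 1), w k ≠ 0) (x : ℕ → H) (v y : H) :
    (∑ k ∈ Finset.range (N + 1), w k) * ⟪v, weightedAverage w x N - y⟫
      = ∑ k ∈ Finset.range (N + 1), w k * ⟪v, x k - y⟫ := by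
  have hcenter : weightedAverage w x N - y
      = (∑ k ∈ Finset.range (N + 1), w k)⁻¹ • ∑ k ∈ Finset.range (N + 1), w k • (x k - y) := by
    simp only [weightedAverage, smul_sub, Finset.sum_sub_distrib, ← Finset.sum_smul, smul_smul,
      inv_mul_cancel₀ hw, one_smul]
  rw [hcenter, real_inner_smul_right, inner_sum, ← mul_assoc, mul_inv_cancel₀ hw, one_mul]
  simp only [real_inner_smul_right]

theorem norm_add_smul_sq_le {a b : H} {A B η : ℝ} (ha : ‖a‖ ≤ A) (hb : ‖b‖ ≤ B) (hη : 0 ≤ η) :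
    ‖a + η • b‖ ^ 2 ≤ 2 * (A ^ 2 + η ^ 2 * B ^ 2) := by
  have hsum : ‖a + η • b‖ ≤ A + η * B := (norm_add_le _ _).trans (by
    rw [norm_smul, Real.norm_of_nonneg hη]; gcongr)
  nlinarith [pow_le_pow_left₀ (norm_nonneg _) hsum 2, sq_nonneg (A - η * B)]

end InnerProductSpace

theorem sum_range_mul_sub_succ_add_le {a b : ℕ → ℝ} {B : ℝ} (ha : ∀ k, a k ≤ a (k + 1))
    (ha0 : 0 ≤ a 0) (hbB : ∀ k, b k ≤ B) (N : ℕ) :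
    ∑ k ∈ Finset.range (N + 1), a k * (b k - b (k + 1)) + a N * b (N + 1) ≤ a N * B := by
  have ha_nonneg : ∀ k, 0 ≤ a k := fun k => Nat.rec ha0 (fun m hm => hm.trans (ha m)) k
  induction N with
  | zero =>
    rw [Finset.sum_range_one]
    linarith [mul_le_mul_of_nonneg_left (hbB 0) ha0]
  | succ N ih =>
    rw [Finset.sum_range_succ]
    nlinarith [ha N, ha_nonneg N, hbB (N + 1)]

section Blocks

variable {d : ℕ} {E : Fin d → Type*} [∀ i, NormedAddCommGroup (E i)]

def blockSet (K : ∀ i, Set (E i)) : Set (PiLp 2 E) := {z | ∀ i, z i ∈ K i}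

def blockProj (P : ∀ i, E i → E i) (a : PiLp 2 E) : PiLp 2 E :=
  WithLp.toLp 2 fun i => P i (a i)

noncomputable def weightedSqDist (w : Fin d → ℝ) (z y : PiLp 2 E) : ℝ :=
  ∑ j, w j * ‖z j - y j‖ ^ 2

theorem PiLp.sum_single_apply (z : PiLp 2 E) : ∑ i, PiLp.single 2 i (z i) = z := by
  simp only [← PiLp.toLp_single, ← WithLp.toLp_sum, Finset.univ_sum_single]

variable {K : ∀ i, Set (E i)} {P : ∀ i, E i → E i}

theorem blockProj_mem (hP : ∀ i, IsNearestPointMap (K i) (P i)) (a : PiLp 2 E) :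
    blockProj P a ∈ blockSet K :=
  fun i => (hP i (a i)).1

variable [∀ i, InnerProductSpace ℝ (E i)]

def blockStep (P : ∀ i, E i → E i) (i : Fin d) (γ : ℝ) (h z : PiLp 2 E) : PiLp 2 E :=
  WithLp.toLp 2 (Function.update z.ofLp i (P i (z i - γ • h i)))

theorem blockStep_mem (hP : ∀ i, IsNearestPointMap (K i) (P i)) {z : PiLp 2 E}
    (hz : z ∈ blockSet K) (i : Fin d) (γ : ℝ) (h : PiLp 2 E) :
    blockStep P i γ h z ∈ blockSet K := by
  intro j
  rcases eq_or_ne j i with rfl | hj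
  · simpa [blockStep] using (hP j _).1
  · simpa [blockStep, hj] using hz j

theorem eq_blockStep {i : Fin d} {γ : ℝ} {h z z' : PiLp 2 E} (hi : z' i = P i (z i - γ • h i))
    (hj : ∀ j, j ≠ i → z' j = z j) : z' = blockStep P i γ h z := by
  ext j : 1
  rcases eq_or_ne j i with rfl | hji
  · simp [blockStep, hi]
  · simp [blockStep, hji, hj j hji]

theorem PiLp.inner_single_left (i : Fin d) (a : E i) (w : PiLp 2 E) :
    ⟪PiLp.single 2 i a, w⟫ = ⟪a, w i⟫ := by
  rw [PiLp.inner_apply, Finset.sum_eq_single i (fun j _ hj => by simp [hj]) (by simp),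
    PiLp.single_eq_same]

theorem norm_blockProj_sub_sq_le (hK : ∀ i, Convex ℝ (K i))
    (hP : ∀ i, IsNearestPointMap (K i) (P i)) {y : PiLp 2 E} (hy : y ∈ blockSet K)
    (a : PiLp 2 E) : ‖blockProj P a - y‖ ^ 2 ≤ ‖a - y‖ ^ 2 := by
  simp only [PiLp.norm_sq_eq_of_L2]
  exact Finset.sum_le_sum fun i _ => (hP i).norm_sub_sq_le (hK i) (a i) (hy i)

theorem weightedSqDist_blockStep_le (hK : ∀ i, Convex ℝ (K i))
    (hP : ∀ i, IsNearestPointMap (K i) (P i)) {y : PiLp 2 E} (hy : y ∈ blockSet K)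
    {w : Fin d → ℝ} (hw : ∀ i, 0 ≤ w i) (i : Fin d) (γ : ℝ) (h z : PiLp 2 E) :
    weightedSqDist w (blockStep P i γ h z) y
      ≤ weightedSqDist w z y - 2 * γ * (w i * ⟪h i, z i - y i⟫) + γ ^ 2 * (w i * ‖h i‖ ^ 2) := by
  have hdiff : weightedSqDist w (blockStep P i γ h z) y - weightedSqDist w z y
      = w i * (‖P i (z i - γ • h i) - y i‖ ^ 2 - ‖z i - y i‖ ^ 2) := by
    rw [weightedSqDist, weightedSqDist, ← Finset.sum_sub_distrib,
      Finset.sum_eq_single i (fun j _ hj => by simp [blockStep, hj]) (by simp)]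
    simp [blockStep, mul_sub]
  have hproj := (hP i).norm_sub_sq_le (hK i) (z i - γ • h i) (hy i)
  have hexpand : ‖z i - γ • h i - y i‖ ^ 2
      = ‖z i - y i‖ ^ 2 - 2 * γ * ⟪h i, z i - y i⟫ + γ ^ 2 * ‖h i‖ ^ 2 := by
    rw [sub_right_comm, norm_sub_sq_real, real_inner_smul_right, norm_smul, mul_pow,
      Real.norm_eq_abs, sq_abs, real_inner_comm]
    ring
  nlinarith [hw i]

end Blocks

section Noise

variable {d : ℕ} {E : Fin d → Type*} [∀ i, NormedAddCommGroup (E i)]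
  [∀ i, InnerProductSpace ℝ (E i)] {p : Fin d → ℝ} {c : ℝ}

noncomputable def blockNoise (p : Fin d → ℝ) (c : ℝ) (h : PiLp 2 E) (i : Fin d) : PiLp 2 E :=
  (c / p i) • PiLp.single 2 i (h i) - c • h

theorem inner_blockNoise (h : PiLp 2 E) (i : Fin d) (v : PiLp 2 E) :
    ⟪blockNoise p c h i, v⟫ = c / p i * ⟪h i, v i⟫ - c * ⟪h, v⟫ := by
  rw [blockNoise, inner_sub_left, real_inner_smul_left, real_inner_smul_left,
    PiLp.inner_single_left]

theorem sum_smul_blockNoise (hp : ∀ i, p i ≠ 0) (hpsum : ∑ i, p i = 1) (h : PiLp 2 E) :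
    ∑ i, p i • blockNoise p c h i = 0 := by
  have hscale : ∀ i, p i * (c / p i) = c := fun i => by field_simp [hp i]
  simp only [blockNoise, smul_sub, smul_smul, hscale, Finset.sum_sub_distrib,
    ← Finset.smul_sum, PiLp.sum_single_apply, ← Finset.sum_smul]
  rw [← Finset.sum_mul, hpsum, one_mul, sub_self]

theorem norm_blockNoise_sq (h : PiLp 2 E) (i : Fin d) :
    ‖blockNoise p c h i‖ ^ 2
      = (c / p i) ^ 2 * ‖h i‖ ^ 2 - 2 * (c / p i) * c * ‖h i‖ ^ 2 + c ^ 2 * ‖h‖ ^ 2 := by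
  rw [blockNoise, norm_sub_sq_real, real_inner_smul_left, real_inner_smul_right,
    PiLp.inner_single_left, real_inner_self_eq_norm_sq, norm_smul, norm_smul, mul_pow, mul_pow,
    PiLp.norm_single, Real.norm_eq_abs, Real.norm_eq_abs, sq_abs, sq_abs]
  ring

theorem sum_mul_blockNoise_sq_le (hp : ∀ i, 0 < p i) (hpsum : ∑ i, p i = 1) (hc : 0 ≤ c)
    (hcp : ∀ i, c ≤ p i) (h : PiLp 2 E) :
    ∑ i, p i * (c / p i * ‖h i‖ ^ 2 + ‖blockNoise p c h i‖ ^ 2) ≤ ‖h‖ ^ 2 := by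
  have hterm : ∀ i, p i * (c / p i * ‖h i‖ ^ 2 + ‖blockNoise p c h i‖ ^ 2)
      = (c - 2 * c ^ 2) * ‖h i‖ ^ 2 + c ^ 2 / p i * ‖h i‖ ^ 2 + c ^ 2 * ‖h‖ ^ 2 * p i := by
    intro i
    rw [norm_blockNoise_sq]
    field_simp [(hp i).ne']
    ring
  have hweight : ∑ i, c ^ 2 / p i * ‖h i‖ ^ 2 ≤ ∑ i, c * ‖h i‖ ^ 2 := by
    refine Finset.sum_le_sum fun i _ => mul_le_mul_of_nonneg_right ?_ (sq_nonneg _)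
    rw [div_le_iff₀ (hp i), sq]
    exact mul_le_mul_of_nonneg_left (hcp i) hc
  have hnorm : ∑ i, ‖h i‖ ^ 2 = ‖h‖ ^ 2 := (PiLp.norm_sq_eq_of_L2 _ h).symm
  simp only [hterm, Finset.sum_add_distrib, ← Finset.mul_sum, hnorm, hpsum] at hweight ⊢
  nlinarith [sq_nonneg (1 - c), sq_nonneg ‖h‖]

end Noise

section Lyapunov

variable {d : ℕ} {E : Fin d → Type*} [∀ i, NormedAddCommGroup (E i)] {p : Fin d → ℝ} {c : ℝ}

noncomputable def lyapunov (p : Fin d → ℝ) (c : ℝ) (y z u : PiLp 2 E) : ℝ :=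
  weightedSqDist (fun j => c / p j) z y + ‖u - y‖ ^ 2

theorem lyapunov_nonneg (hp : ∀ i, 0 < p i) (hc : 0 ≤ c) (y z u : PiLp 2 E) :
    0 ≤ lyapunov p c y z u :=
  add_nonneg (Finset.sum_nonneg fun j _ => mul_nonneg (div_nonneg hc (hp j).le) (sq_nonneg _))
    (sq_nonneg _)

theorem lyapunov_le (hp : ∀ i, 0 < p i) (hcp : ∀ i, c ≤ p i) {y z u : PiLp 2 E} {D : ℝ}
    (hz : ‖z - y‖ ≤ D) (hu : ‖u - y‖ ≤ D) : lyapunov p c y z u ≤ 2 * D ^ 2 := by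
  have hweighted : weightedSqDist (fun j => c / p j) z y ≤ ‖z - y‖ ^ 2 := by
    rw [PiLp.norm_sq_eq_of_L2]
    exact Finset.sum_le_sum fun j _ =>
      mul_le_of_le_one_left (sq_nonneg _) ((div_le_one (hp j)).2 (hcp j))
  have := pow_le_pow_left₀ (norm_nonneg _) hz 2
  have := pow_le_pow_left₀ (norm_nonneg _) hu 2
  rw [lyapunov]
  linarith

variable [∀ i, InnerProductSpace ℝ (E i)]

noncomputable def ghostError (p : Fin d → ℝ) (c γ : ℝ) (h z u : PiLp 2 E) (i : Fin d) : ℝ :=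
  γ / 2 * (c / p i * ‖h i‖ ^ 2 + ‖blockNoise p c h i‖ ^ 2) + ⟪blockNoise p c h i, u - z⟫

theorem sum_mul_ghostError_le (hp : ∀ i, 0 < p i) (hpsum : ∑ i, p i = 1) (hc : 0 ≤ c)
    (hcp : ∀ i, c ≤ p i) {γ : ℝ} (hγ : 0 ≤ γ) (h z u : PiLp 2 E) :
    ∑ i, p i * ghostError p c γ h z u i ≤ γ / 2 * ‖h‖ ^ 2 := by
  have hmean : ∑ i, p i * ⟪blockNoise p c h i, u - z⟫ = 0 := by
    simp only [← real_inner_smul_left, ← sum_inner,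
      sum_smul_blockNoise (fun i => (hp i).ne') hpsum, inner_zero_left]
  have hsplit : ∑ i, p i * ghostError p c γ h z u i
      = γ / 2 * ∑ i, p i * (c / p i * ‖h i‖ ^ 2 + ‖blockNoise p c h i‖ ^ 2)
        + ∑ i, p i * ⟪blockNoise p c h i, u - z⟫ := by
    simp only [ghostError, Finset.mul_sum, ← Finset.sum_add_distrib]
    exact Finset.sum_congr rfl fun i _ => by ring
  rw [hsplit, hmean, add_zero]
  exact mul_le_mul_of_nonneg_left (sum_mul_blockNoise_sq_le hp hpsum hc hcp h) (by positivity)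

variable {K : ∀ i, Set (E i)} {P : ∀ i, E i → E i}

theorem lyapunov_step (hK : ∀ i, Convex ℝ (K i)) (hP : ∀ i, IsNearestPointMap (K i) (P i))
    {y : PiLp 2 E} (hy : y ∈ blockSet K) (hp : ∀ i, 0 < p i) (hc : 0 ≤ c) (i : Fin d)
    {γ : ℝ} (hγ : 0 < γ) (h z u : PiLp 2 E) :
    c * ⟪h, z - y⟫ ≤ (lyapunov p c y z u - lyapunov p c y (blockStep P i γ h z)
        (blockProj P (u + γ • blockNoise p c h i))) / (2 * γ) + ghostError p c γ h z u i := by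
  rw [← sub_le_iff_le_add, le_div_iff₀ (by positivity), lyapunov, lyapunov, ghostError]
  set v := blockNoise p c h i
  have hx := weightedSqDist_blockStep_le hK hP hy (fun j => div_nonneg hc (hp j).le) i γ h z
  have hu := norm_blockProj_sub_sq_le hK hP hy (u + γ • v)
  have hexpand : ‖u + γ • v - y‖ ^ 2 = ‖u - y‖ ^ 2 + 2 * γ * ⟪v, u - y⟫ + γ ^ 2 * ‖v‖ ^ 2 := by
    rw [add_sub_right_comm, norm_add_sq_real, real_inner_smul_right, norm_smul, mul_pow,
      Real.norm_eq_abs, sq_abs, real_inner_comm]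
    ring
  have hnoise : ⟪v, z - y⟫ = c / p i * ⟪h i, z i - y i⟫ - c * ⟪h, z - y⟫ :=
    inner_blockNoise h i (z - y)
  have hsplit : ⟪v, u - y⟫ = ⟪v, u - z⟫ + ⟪v, z - y⟫ := by
    rw [← inner_add_right, sub_add_sub_cancel]
  rw [hsplit, hnoise] at hexpand
  linarith

end Lyapunov

section Iterates

variable {d : ℕ} {E : Fin d → Type*} [∀ i, NormedAddCommGroup (E i)]
  [∀ i, InnerProductSpace ℝ (E i)] (P : ∀ i, E i → E i) (p : Fin d → ℝ) (c : ℝ)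
  (F g : PiLp 2 E → PiLp 2 E) (γ η : ℕ → ℝ) (idx : ℕ → Fin d) (z₀ : PiLp 2 E)

noncomputable def blockIterate : ℕ → PiLp 2 E
  | 0 => z₀
  | k + 1 =>
    blockStep P (idx k) (γ k) (F (blockIterate k) + η k • g (blockIterate k)) (blockIterate k)

noncomputable def ghostIterate : ℕ → PiLp 2 E
  | 0 => z₀
  | k + 1 => blockProj P (ghostIterate k + γ k • blockNoise p c
      (F (blockIterate P F g γ η idx z₀ k) + η k • g (blockIterate P F g γ η idx z₀ k)) (idx k))

noncomputable def stepError (k : ℕ) : ℝ :=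
  ghostError p c (γ k)
    (F (blockIterate P F g γ η idx z₀ k) + η k • g (blockIterate P F g γ η idx z₀ k))
    (blockIterate P F g γ η idx z₀ k) (ghostIterate P p c F g γ η idx z₀ k) (idx k)

variable {K : ∀ i, Set (E i)} {P} {p} {c} {F g γ η idx z₀}

theorem eq_blockIterate {z : ℕ → PiLp 2 E} (h0 : z 0 = z₀)
    (hrec : ∀ k, z (k + 1) (idx k)
        = P (idx k) (z k (idx k) - γ k • (F (z k) (idx k) + η k • g (z k) (idx k)))
      ∧ ∀ j, j ≠ idx k → z (k + 1) j = z k j) :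
    ∀ k, z k = blockIterate P F g γ η idx z₀ k
  | 0 => h0
  | k + 1 => by
    rw [blockIterate, ← eq_blockIterate h0 hrec k]
    exact eq_blockStep (hrec k).1 (hrec k).2

theorem blockIterate_mem (hP : ∀ i, IsNearestPointMap (K i) (P i)) (hz₀ : z₀ ∈ blockSet K)
    (k : ℕ) : blockIterate P F g γ η idx z₀ k ∈ blockSet K :=
  Nat.rec hz₀ (fun _ hk => blockStep_mem hP hk _ _ _) k

theorem ghostIterate_mem (hP : ∀ i, IsNearestPointMap (K i) (P i)) (hz₀ : z₀ ∈ blockSet K) :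
    ∀ k, ghostIterate P p c F g γ η idx z₀ k ∈ blockSet K
  | 0 => hz₀
  | _ + 1 => blockProj_mem hP _

theorem mul_inner_weightedAverage_blockIterate_le (hK : ∀ i, Convex ℝ (K i))
    (hP : ∀ i, IsNearestPointMap (K i) (P i)) (hp : ∀ i, 0 < p i) (hc : 0 ≤ c)
    (hcp : ∀ i, c ≤ p i) {M : ℝ} (hM : ∀ z ∈ blockSet K, ‖z‖ ≤ M)
    (hmono : ∀ z ∈ blockSet K, ∀ y ∈ blockSet K, 0 ≤ ⟪F z - F y, z - y⟫)
    {Cg : ℝ} (hCg : ∀ z ∈ blockSet K, ‖g z‖ ≤ Cg) (hγ : ∀ k, 0 < γ k)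
    (hγmono : ∀ k, γ (k + 1) ≤ γ k) (hη : ∀ k, 0 ≤ η k) {r : ℝ} (hr : r < 1)
    (hz₀ : z₀ ∈ blockSet K) (N : ℕ) {y : PiLp 2 E} (hy : y ∈ blockSet K) :
    c * (∑ k ∈ Finset.range (N + 1), γ k ^ r)
        * ⟪F y, weightedAverage (γ · ^ r) (blockIterate P F g γ η idx z₀) N - y⟫
      ≤ 4 * M ^ 2 * γ N ^ (r - 1) + ∑ k ∈ Finset.range (N + 1),
          γ k ^ r * (2 * c * η k * Cg * M + stepError P p c F g γ η idx z₀ k) := by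
  have hzK := blockIterate_mem (F := F) (g := g) (γ := γ) (η := η) (idx := idx) hP hz₀
  have huK := ghostIterate_mem (p := p) (c := c) (F := F) (g := g) (γ := γ) (η := η) (idx := idx)
    hP hz₀
  set z := blockIterate P F g γ η idx z₀
  set u := ghostIterate P p c F g γ η idx z₀
  have hdist : ∀ w ∈ blockSet K, ‖w - y‖ ≤ 2 * M := fun w hw =>
    (norm_sub_le _ _).trans (by linarith [hM w hw, hM y hy])
  set L : ℕ → ℝ := fun k => lyapunov p c y (z k) (u k)
  set a : ℕ → ℝ := fun k => γ k ^ (r - 1) / 2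
  have ha_nonneg : ∀ k, 0 ≤ a k := fun k =>
    div_nonneg (Real.rpow_nonneg (hγ k).le _) zero_le_two
  have hstep : ∀ k, c * (γ k ^ r * ⟪F y, z k - y⟫) ≤ a k * (L k - L (k + 1))
      + γ k ^ r * (2 * c * η k * Cg * M + stepError P p c F g γ η idx z₀ k) := by
    intro k
    have hlyap :=
      lyapunov_step hK hP hy hp hc (idx k) (hγ k) (F (z k) + η k • g (z k)) (z k) (u k)
    change _ ≤ (L k - L (k + 1)) / (2 * γ k) + stepError P p c F g γ η idx z₀ k at hlyap
    have hFy := mul_le_mul_of_nonneg_left (inner_le_inner_add_smul_add (hmono _ (hzK k) _ hy)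
      (hCg _ (hzK k)) (hdist _ (hzK k)) (hη k)) hc
    have ha : a k * (L k - L (k + 1)) = γ k ^ r * ((L k - L (k + 1)) / (2 * γ k)) := by
      simp only [a, Real.rpow_sub_one (hγ k).ne']
      field_simp
    rw [mul_left_comm, ha, ← mul_add]
    refine mul_le_mul_of_nonneg_left ?_ (Real.rpow_nonneg (hγ k).le r)
    linarith
  have ha_mono : ∀ k, a k ≤ a (k + 1) := fun k => by
    simp only [a]
    gcongr ?_ / 2
    exact Real.rpow_le_rpow_of_nonpos (hγ _) (hγmono k) (by linarith)
  have habel := sum_range_mul_sub_succ_add_le ha_mono (ha_nonneg 0)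
    (fun k => lyapunov_le hp hcp (hdist _ (hzK k)) (hdist _ (huK k))) N
  have haL : 0 ≤ a N * L (N + 1) := mul_nonneg (ha_nonneg N) (lyapunov_nonneg hp hc _ _ _)
  have hS : 0 < ∑ k ∈ Finset.range (N + 1), γ k ^ r :=
    Finset.sum_pos (fun k _ => Real.rpow_pos_of_pos (hγ k) r) ⟨0, by simp⟩
  rw [mul_assoc, mul_inner_weightedAverage_sub hS.ne', Finset.mul_sum]
  calc _ ≤ ∑ k ∈ Finset.range (N + 1), (a k * (L k - L (k + 1))
          + γ k ^ r * (2 * c * η k * Cg * M + stepError P p c F g γ η idx z₀ k)) :=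
        Finset.sum_le_sum fun k _ => hstep k
    _ ≤ _ := by
      rw [Finset.sum_add_distrib]
      have : a N * (2 * (2 * M) ^ 2) = 4 * M ^ 2 * γ N ^ (r - 1) := by ring
      linarith

end Iterates

section History

variable {Ω : Type*}

/-- Factoring through the first `N` indices stands in for measurability with respect to
`σ(i_0, …, i_{N-1})`: the indices are finitely valued, so no measurability of the maps driving the
recursion is needed. -/
theorem factorsThrough_history {α S : Type*} {ι : ℕ → Ω → α} {s : ℕ → Ω → S}
    (step : ℕ → α → S → S) (h0 : ∀ ω ω', s 0 ω = s 0 ω')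
    (hs : ∀ k ω, s (k + 1) ω = step k (ι k ω) (s k ω)) {k N : ℕ} (hkN : k ≤ N) :
    (s k).FactorsThrough (fun ω (j : Fin N) => ι j ω) := by
  induction k with
  | zero => exact fun ω ω' _ => h0 ω ω'
  | succ k ih =>
    intro ω ω' hωω'
    rw [hs, hs, ih (by omega) hωω', show ι k ω = ι k ω' from congrFun hωω' ⟨k, by omega⟩]

variable [MeasurableSpace Ω] {μ : Measure Ω}

theorem ProbabilityTheory.iIndepFun.indepFun_history {α : Type*} [MeasurableSpace α]
    {ι : ℕ → Ω → α} (hind : iIndepFun ι μ) (hmeas : ∀ k, Measurable (ι k)) (k : ℕ) :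
    IndepFun (fun ω (j : Fin k) => ι j ω) (ι k) μ :=
  (hind.indepFun_finset (Finset.range k) {k} (by simp) hmeas).comp
    (φ := fun f (j : Fin k) => f ⟨j, by simp⟩) (ψ := fun f => f ⟨k, by simp⟩)
    (measurable_pi_lambda _ fun _ => measurable_pi_apply _) (measurable_pi_apply _)

theorem Function.FactorsThrough.integrable [IsFiniteMeasure μ] {κ : Type*} [MeasurableSpace κ]
    [Finite κ] [MeasurableSingletonClass κ] {H : Ω → κ} (hH : Measurable H) {f : Ω → ℝ}
    (hf : f.FactorsThrough H) : Integrable f μ := by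
  obtain ⟨e, rfl⟩ := (Function.factorsThrough_iff f).1 hf
  exact Integrable.of_finite.comp_measurable hH

theorem ProbabilityTheory.IndepFun.integral_eq_integral_sum [IsFiniteMeasure μ] {κ τ : Type*}
    [MeasurableSpace κ] [Finite κ] [MeasurableSingletonClass κ] [MeasurableSpace τ] [Fintype τ]
    [MeasurableSingletonClass τ] {H : Ω → κ} {I : Ω → τ} (hH : Measurable H) (hI : Measurable I)
    (hHI : IndepFun H I μ) {ψ : Ω → τ → ℝ} (hψ : ∀ i, (ψ · i).FactorsThrough H) :
    ∫ ω, ψ ω (I ω) ∂μ = ∫ ω, ∑ i, μ.real (I ⁻¹' {i}) * ψ ω i ∂μ := by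
  choose Φ hΦ using fun i => (Function.factorsThrough_iff _).1 (hψ i)
  have hψΦ : ∀ ω i, ψ ω i = Φ i (H ω) := fun ω i => congrFun (hΦ i) ω
  have hsplit : ∀ ω, ψ ω (I ω) = ∑ i, Φ i (H ω) * ({i} : Set τ).indicator 1 (I ω) := fun ω => by
    rw [Finset.sum_eq_single (I ω) (fun i _ hi => by simp [Ne.symm hi]) (by simp), hψΦ]
    simp
  have hint : ∀ i, Integrable (fun ω => ψ ω i) μ := fun i => (hψ i).integrable hH
  simp_rw [hsplit]
  rw [integral_finsetSum _ fun i _ => ?_, integral_finsetSum _ fun i _ => (hint i).const_mul _]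
  · refine Finset.sum_congr rfl fun i _ => ?_
    rw [hHI.integral_fun_comp_mul_comp hH.aemeasurable hI.aemeasurable
      .of_discrete .of_discrete, integral_const_mul, mul_comm]
    simp_rw [← Set.indicator_comp_right, Pi.one_comp, hψΦ]
    rw [integral_indicator_one (hI (measurableSet_singleton i))]
  · exact Function.FactorsThrough.integrable (hH.prodMk hI) fun ω ω' h => by
      simp only [Prod.mk.injEq] at h
      rw [h.1, h.2]

theorem integral_le_of_le_add_sum_div [IsProbabilityMeasure μ] {f : Ω → ℝ} {e : ℕ → Ω → ℝ}
    {s : Finset ℕ} {w a b : ℕ → ℝ} {A D : ℝ} (hf : Integrable f μ)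
    (he : ∀ k, Integrable (e k) μ) (heb : ∀ k, ∫ ω, e k ω ∂μ ≤ b k) (hw : ∀ k, 0 ≤ w k)
    (hD : 0 ≤ D) (h : ∀ ω, f ω ≤ (A + ∑ k ∈ s, w k * (a k + e k ω)) / D) :
    ∫ ω, f ω ∂μ ≤ (A + ∑ k ∈ s, w k * (a k + b k)) / D := by
  have hterm : ∀ k, Integrable (fun ω => w k * (a k + e k ω)) μ := fun k =>
    ((integrable_const (a k)).add (he k)).const_mul (w k)
  have hsum := integrable_finsetSum s fun k _ => hterm k
  refine (integral_mono (g := fun ω => (A + ∑ k ∈ s, w k * (a k + e k ω)) / D) hf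
    (((integrable_const A).add hsum).div_const D) h).trans ?_
  rw [integral_div, integral_add (integrable_const A) hsum, integral_const, probReal_univ,
    one_smul, integral_finsetSum s fun k _ => hterm k]
  gcongr with k
  rw [integral_const_mul, integral_add (integrable_const _) (he k), integral_const, probReal_univ,
    one_smul]
  exact mul_le_mul_of_nonneg_left (by linarith [heb k]) (hw k)

end History

section Sampling

variable {Ω : Type*} {d : ℕ} {E : Fin d → Type*} [∀ i, NormedAddCommGroup (E i)]
  [∀ i, InnerProductSpace ℝ (E i)] {K : ∀ i, Set (E i)} {P : ∀ i, E i → E i} {p : Fin d → ℝ}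
  {c : ℝ} {F g : PiLp 2 E → PiLp 2 E} {γ η : ℕ → ℝ} {z₀ : PiLp 2 E} {ι : ℕ → Ω → Fin d}

theorem iterates_factorsThrough_history {k N : ℕ} (hkN : k ≤ N) :
    (fun ω => (blockIterate P F g γ η (ι · ω) z₀ k, ghostIterate P p c F g γ η (ι · ω) z₀ k))
      |>.FactorsThrough (fun ω (j : Fin N) => ι j ω) :=
  factorsThrough_history (s := fun k ω =>
      (blockIterate P F g γ η (ι · ω) z₀ k, ghostIterate P p c F g γ η (ι · ω) z₀ k))
    (fun k i s => (blockStep P i (γ k) (F s.1 + η k • g s.1) s.1,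
      blockProj P (s.2 + γ k • blockNoise p c (F s.1 + η k • g s.1) i)))
    (fun _ _ => rfl) (fun _ _ => rfl) hkN

theorem blockIterate_factorsThrough_history {k N : ℕ} (hkN : k ≤ N) :
    (fun ω => blockIterate P F g γ η (ι · ω) z₀ k).FactorsThrough (fun ω (j : Fin N) => ι j ω) :=
  factorsThrough_history (s := fun k ω => blockIterate P F g γ η (ι · ω) z₀ k)
    (fun k i z => blockStep P i (γ k) (F z + η k • g z) z) (fun _ _ => rfl) (fun _ _ => rfl) hkN

variable [MeasurableSpace Ω] {μ : Measure Ω}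

theorem integrable_stepError [IsFiniteMeasure μ] (hmeas : ∀ k, Measurable (ι k)) (k : ℕ) :
    Integrable (fun ω => stepError P p c F g γ η (ι · ω) z₀ k) μ := by
  refine Function.FactorsThrough.integrable (measurable_pi_lambda _ fun j => hmeas j)
    (H := fun ω (j : Fin (k + 1)) => ι j ω) fun ω ω' hωω' => ?_
  have hstate := Prod.mk.inj (iterates_factorsThrough_history (P := P) (p := p) (c := c) (F := F)
    (g := g) (γ := γ) (η := η) (z₀ := z₀) k.le_succ hωω')
  have hidx : ι k ω = ι k ω' := congrFun hωω' (Fin.last k)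
  simp only [stepError, hstate.1, hstate.2, hidx]

theorem integrable_comp_weightedAverage_blockIterate [IsFiniteMeasure μ]
    (hmeas : ∀ k, Measurable (ι k)) (φ : PiLp 2 E → ℝ) (w : ℕ → ℝ) (N : ℕ) :
    Integrable (fun ω => φ (weightedAverage w (blockIterate P F g γ η (ι · ω) z₀) N)) μ := by
  refine Function.FactorsThrough.integrable (H := fun ω (j : Fin N) => ι j ω)
    (measurable_pi_lambda _ fun j => hmeas j) fun ω ω' hωω' => ?_
  refine congrArg (fun v => φ ((∑ k ∈ Finset.range (N + 1), w k)⁻¹ • v))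
    (Finset.sum_congr rfl fun k hk => ?_)
  exact congrArg (w k • ·) (blockIterate_factorsThrough_history (P := P) (F := F) (g := g)
    (γ := γ) (η := η) (z₀ := z₀) (Finset.mem_range_succ_iff.1 hk) hωω')

theorem integral_stepError_le [IsProbabilityMeasure μ] (hmeas : ∀ k, Measurable (ι k))
    (hind : iIndepFun ι μ) (hlaw : ∀ k i, μ {ω | ι k ω = i} = ENNReal.ofReal (p i))
    (hp : ∀ i, 0 < p i) (hpsum : ∑ i, p i = 1) (hc : 0 ≤ c) (hcp : ∀ i, c ≤ p i)
    (hP : ∀ i, IsNearestPointMap (K i) (P i)) (hz₀ : z₀ ∈ blockSet K) (k : ℕ) (hγ : 0 ≤ γ k)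
    {B : ℝ} (hB : ∀ z ∈ blockSet K, ‖F z + η k • g z‖ ^ 2 ≤ B) :
    ∫ ω, stepError P p c F g γ η (ι · ω) z₀ k ∂μ ≤ γ k / 2 * B := by
  have hstate := iterates_factorsThrough_history (P := P) (p := p) (c := c) (F := F) (g := g)
    (γ := γ) (η := η) (z₀ := z₀) (ι := ι) (le_refl k)
  have hhist : Measurable (fun ω (j : Fin k) => ι j ω) := measurable_pi_lambda _ fun j => hmeas j
  have hreal : ∀ i, μ.real (ι k ⁻¹' {i}) = p i := fun i => by
    rw [measureReal_def, ← ENNReal.toReal_ofReal (hp i).le, ← hlaw k i]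
    rfl
  set st := fun ω =>
    (blockIterate P F g γ η (ι · ω) z₀ k, ghostIterate P p c F g γ η (ι · ω) z₀ k)
  set ψ : PiLp 2 E × PiLp 2 E → Fin d → ℝ :=
    fun s i => ghostError p c (γ k) (F s.1 + η k • g s.1) s.1 s.2 i
  rw [show (fun ω => stepError P p c F g γ η (ι · ω) z₀ k) = fun ω => ψ (st ω) (ι k ω) from rfl,
    (hind.indepFun_history hmeas k).integral_eq_integral_sum (ψ := fun ω i => ψ (st ω) i) hhist
      (hmeas k) fun i => hstate.comp_left (ψ · i)]
  simp only [hreal]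
  calc _ ≤ ∫ _, γ k / 2 * B ∂μ := by
        refine integral_mono ((hstate.comp_left fun s => ∑ i, p i * ψ s i).integrable hhist)
          (integrable_const _) fun ω => ?_
        exact (sum_mul_ghostError_le hp hpsum hc hcp hγ _ _ _).trans
          (mul_le_mul_of_nonneg_left (hB _ (blockIterate_mem hP hz₀ k)) (by positivity))
    _ = γ k / 2 * B := by simp

end Sampling

theorem dualGap_le_of_forall {d : ℕ} {n : Fin d → ℕ} {X : Set (BlockSpace d n)}
    {F : BlockSpace d n → BlockSpace d n} {x : BlockSpace d n} {B : ℝ} (hX : X.Nonempty)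
    (h : ∀ y ∈ X, ⟪F y, x - y⟫ ≤ B) : dualGap X F x ≤ B :=
  csSup_le (hX.image _) (Set.forall_mem_image.2 h)

theorem aRBIRG_infeasibility_bound_general {d : ℕ} {n : Fin d → ℕ}
    {Ω : Type*} [MeasurableSpace Ω] (μ : Measure Ω) [IsProbabilityMeasure μ]
    (Xs : ∀ i, Set (EuclideanSpace ℝ (Fin (n i))))
    (hXcv : ∀ i, Convex ℝ (Xs i))
    (X : Set (BlockSpace d n)) (hX : X = {x | ∀ i, x i ∈ Xs i})
    (M : ℝ) (hM : ∀ x ∈ X, ‖x‖ ≤ M)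
    (g : BlockSpace d n → BlockSpace d n)
    (Cf : ℝ) (hCf : ∀ x ∈ X, ‖g x‖ ≤ Cf)
    (F : BlockSpace d n → BlockSpace d n)
    (hmono : ∀ x ∈ X, ∀ y ∈ X, 0 ≤ ⟪F x - F y, x - y⟫)
    (CF : ℝ) (hCF : ∀ x ∈ X, ‖F x‖ ≤ CF)
    (p : Fin d → ℝ) (hp : ∀ i, 0 < p i) (hpsum : ∑ i, p i = 1)
    (pmin : ℝ) (hpmin : IsLeast (Set.range p) pmin)
    (ι : ℕ → Ω → Fin d) (hιmeas : ∀ k, Measurable (ι k))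
    (hindep : iIndepFun ι μ)
    (hdist : ∀ k i, μ {ω | ι k ω = i} = ENNReal.ofReal (p i))
    (γ η : ℕ → ℝ) (hγpos : ∀ k, 0 < γ k) (hηpos : ∀ k, 0 < η k)
    (hγmono : ∀ k, γ (k + 1) ≤ γ k)
    (r : ℝ) (hr1 : r < 1)
    (proj : ∀ i, EuclideanSpace ℝ (Fin (n i)) → EuclideanSpace ℝ (Fin (n i)))
    (hproj : ∀ i z, proj i z ∈ Xs i ∧ ∀ w ∈ Xs i, ‖z - proj i z‖ ≤ ‖z - w‖)
    (x0 : BlockSpace d n) (hx0X : x0 ∈ X)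
    (x : ℕ → Ω → BlockSpace d n)
    (hx0 : ∀ ω, x 0 ω = x0)
    (hxrec : ∀ k ω,
      (x (k + 1) ω) (ι k ω) = proj (ι k ω) ((x k ω) (ι k ω)
        - γ k • (F (x k ω) (ι k ω) + η k • g (x k ω) (ι k ω)))
      ∧ ∀ j, j ≠ ι k ω → x (k + 1) ω j = x k ω j)
    (N : ℕ) :
    (∫ ω, dualGap X F ((∑ k ∈ Finset.range (N + 1), γ k ^ r)⁻¹
        • ∑ k ∈ Finset.range (N + 1), γ k ^ r • x k ω) ∂μ)
      ≤ (4 * M ^ 2 * γ N ^ (r - 1)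
          + ∑ k ∈ Finset.range (N + 1),
              γ k ^ r * (2 * pmin * η k * Cf * M + γ k * CF ^ 2 + γ k * η k ^ 2 * Cf ^ 2))
        / (pmin * ∑ k ∈ Finset.range (N + 1), γ k ^ r) := by
  obtain rfl : X = blockSet Xs := hX
  obtain ⟨hpmin_pos, hpmin_le⟩ : 0 < pmin ∧ ∀ i, pmin ≤ p i :=
    ⟨hpmin.1.choose_spec ▸ hp _, fun i => hpmin.2 ⟨i, rfl⟩⟩
  have hS : 0 < ∑ k ∈ Finset.range (N + 1), γ k ^ r :=
    Finset.sum_pos (fun k _ => Real.rpow_pos_of_pos (hγpos k) r) ⟨0, by simp⟩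
  have hx : ∀ k ω, x k ω = blockIterate proj F g γ η (ι · ω) x0 k := fun k ω =>
    eq_blockIterate (z := (x · ω)) (hx0 ω) (fun k => hxrec k ω) k
  have herr : ∀ k, ∫ ω, stepError proj p pmin F g γ η (ι · ω) x0 k ∂μ
      ≤ γ k * CF ^ 2 + γ k * η k ^ 2 * Cf ^ 2 := fun k =>
    (integral_stepError_le hιmeas hindep hdist hp hpsum hpmin_pos.le hpmin_le hproj hx0X k
      (hγpos k).le fun z hz => norm_add_smul_sq_le (hCF z hz) (hCf z hz) (hηpos k).le).trans_eq
      (by ring)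
  simp only [hx]
  refine (integral_le_of_le_add_sum_div
    (integrable_comp_weightedAverage_blockIterate hιmeas _ _ N)
    (fun k => integrable_stepError hιmeas k) herr (fun k => Real.rpow_nonneg (hγpos k).le r)
    (mul_pos hpmin_pos hS).le fun ω => dualGap_le_of_forall ⟨x0, hx0X⟩ fun y hy =>
      (le_div_iff₀' (mul_pos hpmin_pos hS)).2 <| mul_inner_weightedAverage_blockIterate_le hXcv
        hproj hp hpmin_pos.le hpmin_le hM hmono hCf hγpos hγmono (fun k => (hηpos k).le) hr1
        hx0X N hy).trans_eq ?_
  simp only [add_assoc]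

/-- Infeasibility bound for the aRB-IRG algorithm (Proposition 3.2(b)):
for nonincreasing positive stepsizes `γ` and regularization parameters `η`, bounded `X`,
bounded subgradients and mapping, and `SOL(X,F) ≠ ∅`, one has for every `N ≥ 1`
`E[GAP(x̄_N)] ≤ (4M²γ_N^{r−1} + Σ_{k=0}^N γ_k^r(2p_min η_k C_f M + γ_k C_F² + γ_k η_k² C_f²))
  / (p_min Σ_{k=0}^N γ_k^r)`. -/
theorem aRBIRG_infeasibility_bound {d : ℕ} {n : Fin d → ℕ}
    {Ω : Type*} [MeasurableSpace Ω] (μ : Measure Ω) [IsProbabilityMeasure μ]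
    [MeasurableSpace (BlockSpace d n)] [BorelSpace (BlockSpace d n)]
    (Xs : ∀ i, Set (EuclideanSpace ℝ (Fin (n i))))
    (hXne : ∀ i, (Xs i).Nonempty) (hXcl : ∀ i, IsClosed (Xs i)) (hXcv : ∀ i, Convex ℝ (Xs i))
    (X : Set (BlockSpace d n)) (hX : X = {x | ∀ i, x i ∈ Xs i})
    (M : ℝ) (hM : ∀ x ∈ X, ‖x‖ ≤ M)
    (f : BlockSpace d n → ℝ) (hf : ConvexOn ℝ Set.univ f)
    (g : BlockSpace d n → BlockSpace d n)
    (hsubgrad : ∀ x ∈ X, ∀ y : BlockSpace d n, f x + ⟪g x, y - x⟫ ≤ f y)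
    (Cf : ℝ) (hCf : ∀ x ∈ X, ‖g x‖ ≤ Cf)
    (F : BlockSpace d n → BlockSpace d n) (hFcont : Continuous F)
    (hmono : ∀ x ∈ X, ∀ y ∈ X, 0 ≤ ⟪F x - F y, x - y⟫)
    (CF : ℝ) (hCF : ∀ x ∈ X, ‖F x‖ ≤ CF)
    (p : Fin d → ℝ) (hp : ∀ i, 0 < p i) (hpsum : ∑ i, p i = 1)
    (pmin : ℝ) (hpmin : IsLeast (Set.range p) pmin)
    (ι : ℕ → Ω → Fin d) (hιmeas : ∀ k, Measurable (ι k))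
    (hindep : iIndepFun ι μ)
    (hdist : ∀ k i, μ {ω | ι k ω = i} = ENNReal.ofReal (p i))
    (γ η : ℕ → ℝ) (hγpos : ∀ k, 0 < γ k) (hηpos : ∀ k, 0 < η k)
    (hγmono : ∀ k, γ (k + 1) ≤ γ k) (hηmono : ∀ k, η (k + 1) ≤ η k)
    (r : ℝ) (hr0 : 0 ≤ r) (hr1 : r < 1)
    (proj : ∀ i, EuclideanSpace ℝ (Fin (n i)) → EuclideanSpace ℝ (Fin (n i)))
    (hproj : ∀ i z, proj i z ∈ Xs i ∧ ∀ w ∈ Xs i, ‖z - proj i z‖ ≤ ‖z - w‖)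
    (x0 : BlockSpace d n) (hx0X : x0 ∈ X)
    (x : ℕ → Ω → BlockSpace d n) (hxmeas : ∀ k, Measurable (x k))
    (hx0 : ∀ ω, x 0 ω = x0)
    (hxrec : ∀ k ω,
      (x (k + 1) ω) (ι k ω) = proj (ι k ω) ((x k ω) (ι k ω)
        - γ k • (F (x k ω) (ι k ω) + η k • g (x k ω) (ι k ω)))
      ∧ ∀ j, j ≠ ι k ω → x (k + 1) ω j = x k ω j)
    (hSOL : (VISol X F).Nonempty)
    (N : ℕ) (hN : 1 ≤ N) :
    (∫ ω, dualGap X F ((∑ k ∈ Finset.range (N + 1), γ k ^ r)⁻¹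
        • ∑ k ∈ Finset.range (N + 1), γ k ^ r • x k ω) ∂μ)
      ≤ (4 * M ^ 2 * γ N ^ (r - 1)
          + ∑ k ∈ Finset.range (N + 1),
              γ k ^ r * (2 * pmin * η k * Cf * M + γ k * CF ^ 2 + γ k * η k ^ 2 * Cf ^ 2))
        / (pmin * ∑ k ∈ Finset.range (N + 1), γ k ^ r) :=
  aRBIRG_infeasibility_bound_general μ Xs hXcv X hX M hM g Cf hCf F hmono CF hCF p hp hpsum pmin
    hpmin ι hιmeas hindep hdist γ η hγpos hηpos hγmono r hr1 proj hproj x0 hx0X x hx0 hxrec N
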